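/- Soundness and strong completeness of IMCalc with respect to full constructive neighbourhood models: for every set Γ of L-formulas and every L-formula φ, Γ ⊢_{IMCalc} φ if and only if for every full constructive neighbourhood model M and every world w of M, if M,w ⊩ ψ for all ψ ∈ Γ then M,w ⊩ φ. -/

import Mathlib

/-
Common formalisation of the syntax and semantics of the intuitionistic
monotone modal logic IM, its generalised Hilbert calculi, intuitionistic
neighbourhood models, IFOM-structures, and related constructions.
-/

namespace IMPaper

/-- Formulas of the monotone modal language L. -/
inductive Formula : Type
  | prop : ℕ → Formula
  | bot  : Formula
  | and  : Formula → Formula → Formula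
  | or   : Formula → Formula → Formula
  | imp  : Formula → Formula → Formula
  | box  : Formula → Formula
  | dia  : Formula → Formula
deriving DecidableEq

/-- Negation: ¬φ abbreviates φ → ⊥. -/
def Formula.neg (φ : Formula) : Formula := φ.imp .bot

/-- Top: ⊤ abbreviates ⊥ → ⊥. -/
def Formula.top : Formula := Formula.bot.imp .bot

/-- Substitution of formulas for proposition letters. -/
def Formula.subst (σ : ℕ → Formula) : Formula → Formula
  | .prop i   => σ i
  | .bot      => .bot
  | .and φ ψ  => .and (φ.subst σ) (ψ.subst σ)
  | .or φ ψ   => .or (φ.subst σ) (ψ.subst σ)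
  | .imp φ ψ  => .imp (φ.subst σ) (ψ.subst σ)
  | .box φ    => .box (φ.subst σ)
  | .dia φ    => .dia (φ.subst σ)

private def pp0 : Formula := .prop 0
private def pp1 : Formula := .prop 1
private def pp2 : Formula := .prop 2

/-- A standard axiomatisation of intuitionistic propositional logic. -/
def IpcAx : Set Formula :=
  { Formula.imp pp0 (.imp pp1 pp0),
    Formula.imp (.imp pp0 (.imp pp1 pp2)) (.imp (.imp pp0 pp1) (.imp pp0 pp2)),
    Formula.imp (.and pp0 pp1) pp0,
    Formula.imp (.and pp0 pp1) pp1,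
    Formula.imp pp0 (.imp pp1 (.and pp0 pp1)),
    Formula.imp pp0 (.or pp0 pp1),
    Formula.imp pp1 (.or pp0 pp1),
    Formula.imp (.imp pp0 pp2) (.imp (.imp pp1 pp2) (.imp (.or pp0 pp1) pp2)),
    Formula.imp .bot pp0 }

/-- All substitution instances of a set of formulas. -/
def Instances (Ax : Set Formula) : Set Formula :=
  {φ | ∃ ψ ∈ Ax, ∃ σ, φ = ψ.subst σ}

/-- 𝒜x: all substitution instances of Ax together with all substitution
instances of the axioms of intuitionistic propositional logic. -/
def ScrAx (Ax : Set Formula) : Set Formula := Instances Ax ∪ Instances IpcAx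

/-- The generalised Hilbert calculus GHC(Ax). -/
inductive GHC (Ax : Set Formula) : Set Formula → Formula → Prop
  | el {Γ : Set Formula} {φ : Formula} : φ ∈ Γ → GHC Ax Γ φ
  | ax {Γ : Set Formula} {φ : Formula} : φ ∈ ScrAx Ax → GHC Ax Γ φ
  | mp {Γ : Set Formula} {φ ψ : Formula} :
      GHC Ax Γ φ → GHC Ax Γ (φ.imp ψ) → GHC Ax Γ ψ
  | monBox {Γ : Set Formula} {φ ψ : Formula} :
      GHC Ax ∅ (φ.imp ψ) → GHC Ax Γ ((Formula.box φ).imp (Formula.box ψ))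
  | monDia {Γ : Set Formula} {φ ψ : Formula} :
      GHC Ax ∅ (φ.imp ψ) → GHC Ax Γ ((Formula.dia φ).imp (Formula.dia ψ))

/-- The axioms (neg_a) and (I_◇) of the calculus IMCalc. -/
def IMAx : Set Formula :=
  { Formula.imp ((Formula.box pp0).and (Formula.dia pp0.neg)) .bot,
    Formula.imp ((Formula.box Formula.top).imp (Formula.dia pp0)) (Formula.dia pp0) }

/-- Derivability in the calculus IMCalc = GHC({(□p ∧ ◇¬p) → ⊥, (□⊤ → ◇p) → ◇p}). -/
def IMC : Set Formula → Formula → Prop := GHC IMAx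

/-- An intuitionistic neighbourhood: a partial function W ⇀ 𝒫(W), encoded as a
domain together with a (total) value function whose values matter on the domain. -/
structure Nbhd (W : Type) where
  dom : Set W
  val : W → Set W

/-- The data of an intuitionistic neighbourhood model. -/
structure INStruct (W : Type) where
  le : W → W → Prop
  N : Set (Nbhd W)
  V : ℕ → Set W

variable {W W' : Type}

/-- A set is upward closed w.r.t. the order of the structure. -/
def INStruct.Up (M : INStruct W) (s : Set W) : Prop :=
  ∀ ⦃w v : W⦄, M.le w v → w ∈ s → v ∈ s

/-- `M` is an intuitionistic neighbourhood model: the order is a partial order,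
the domain of every neighbourhood is upward closed, and the valuation assigns
upward closed sets to proposition letters. -/
def INStruct.IsModel (M : INStruct W) : Prop :=
  IsPartialOrder W M.le ∧ (∀ a ∈ M.N, M.Up a.dom) ∧ ∀ i, M.Up (M.V i)

/-- Truth of a formula at a world of an intuitionistic neighbourhood model. -/
def INStruct.sat (M : INStruct W) : Formula → W → Prop
  | .prop i, w  => w ∈ M.V i
  | .bot, _     => False
  | .and φ ψ, w => M.sat φ w ∧ M.sat ψ w
  | .or φ ψ, w  => M.sat φ w ∨ M.sat ψ w
  | .imp φ ψ, w => ∀ v, M.le w v → M.sat φ v → M.sat ψ v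
  | .box φ, w   => ∃ a ∈ M.N, w ∈ a.dom ∧
      ∀ w', M.le w w' → ∀ v ∈ a.val w', M.sat φ v
  | .dia φ, w   => ∀ w', M.le w w' → ∀ a ∈ M.N, w' ∈ a.dom →
      ∃ v ∈ a.val w', M.sat φ v

/-- Semantic consequence over the class of all intuitionistic neighbourhood models. -/
def INConseq (Γ : Set Formula) (φ : Formula) : Prop :=
  ∀ (W : Type) (M : INStruct W), M.IsModel →
    ∀ w : W, (∀ ψ ∈ Γ, M.sat ψ w) → M.sat φ w

/-- A coherent intuitionistic neighbourhood: conditions (N1) and (N2). -/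
def INStruct.CoherentNbhd (M : INStruct W) (a : Nbhd W) : Prop :=
  (∀ ⦃w w' : W⦄, M.le w w' → w ∈ a.dom → ∀ v ∈ a.val w, ∃ v' ∈ a.val w', M.le v v') ∧
  (∀ ⦃w : W⦄, w ∈ a.dom → ∀ v ∈ a.val w, ∀ v', M.le v v' →
      ∃ w', M.le w w' ∧ v' ∈ a.val w')

/-- A model is coherent if all its intuitionistic neighbourhoods are coherent. -/
def INStruct.Coherent (M : INStruct W) : Prop := ∀ a ∈ M.N, M.CoherentNbhd a

/-- Semantic consequence over the class of coherent intuitionistic neighbourhood models. -/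
def CohConseq (Γ : Set Formula) (φ : Formula) : Prop :=
  ∀ (W : Type) (M : INStruct W), M.IsModel → M.Coherent →
    ∀ w : W, (∀ ψ ∈ Γ, M.sat ψ w) → M.sat φ w

/-- The relation R: w R v iff v ∈ a(w) for some neighbourhood a of w. -/
def INStruct.R (M : INStruct W) (w v : W) : Prop :=
  ∃ a ∈ M.N, w ∈ a.dom ∧ v ∈ a.val w

/-- R~-Cartesian: w ≤~ v R~ w implies w = v (with ~ the equivalence closures). -/
def INStruct.RCartesian (M : INStruct W) : Prop :=
  ∀ w v, Relation.EqvGen M.le w v → Relation.EqvGen M.R v w → w = v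

/-- N-Cartesian: w R~ v and w, v ∈ dom(a) imply a(w) = a(v). -/
def INStruct.NCartesian (M : INStruct W) : Prop :=
  ∀ a ∈ M.N, ∀ w v, Relation.EqvGen M.R w v → w ∈ a.dom → v ∈ a.dom →
    a.val w = a.val v

/-- Cartesian: both R~-Cartesian and N-Cartesian. -/
def INStruct.Cartesian (M : INStruct W) : Prop := M.RCartesian ∧ M.NCartesian

/-- Isomorphism of intuitionistic neighbourhood structures. -/
def Isomorphic (M : INStruct W) (M' : INStruct W') : Prop :=
  ∃ (α : W → W') (ν : Nbhd W → Nbhd W'),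
    Function.Bijective α ∧ Set.BijOn ν M.N M'.N ∧
    (∀ w v, M.le w v ↔ M'.le (α w) (α v)) ∧
    (∀ a ∈ M.N, ∀ w, w ∈ a.dom ↔ α w ∈ (ν a).dom) ∧
    (∀ a ∈ M.N, ∀ u ∈ a.dom, ∀ w, w ∈ a.val u ↔ α w ∈ (ν a).val (α u)) ∧
    (∀ i w, w ∈ M.V i ↔ α w ∈ M'.V i)

end IMPaper
namespace IMPaper

variable {W : Type}

/-- The data of a constructive neighbourhood model. -/
structure CNStruct (W : Type) where
  le : W → W → Prop
  nf : W → Set (Set W)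
  V : ℕ → Set W

/-- `M` is a constructive neighbourhood model: the order is a preorder and the
valuation assigns upward closed sets. -/
def CNStruct.IsModel (M : CNStruct W) : Prop :=
  IsPreorder W M.le ∧ ∀ i, ∀ ⦃w v : W⦄, M.le w v → w ∈ M.V i → v ∈ M.V i

/-- Fullness: if γ(w) ≠ ∅ and w ⪯ w' then γ(w') ≠ ∅. -/
def CNStruct.Full (M : CNStruct W) : Prop :=
  ∀ ⦃w w' : W⦄, M.le w w' → M.nf w ≠ ∅ → M.nf w' ≠ ∅

/-- Truth at a world of a constructive neighbourhood model. -/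
def CNStruct.sat (M : CNStruct W) : Formula → W → Prop
  | .prop i, w  => w ∈ M.V i
  | .bot, _     => False
  | .and φ ψ, w => M.sat φ w ∧ M.sat ψ w
  | .or φ ψ, w  => M.sat φ w ∨ M.sat ψ w
  | .imp φ ψ, w => ∀ v, M.le w v → M.sat φ v → M.sat ψ v
  | .box φ, w   => ∀ w', M.le w w' → ∃ a ∈ M.nf w', ∀ v ∈ a, M.sat φ v
  | .dia φ, w   => ∀ w', M.le w w' → ∀ a ∈ M.nf w', ∃ v ∈ a, M.sat φ v

/-- 𝒞(w): all sets of the form {a(f(a)) : a ∈ N_w} for a choice function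
f : N_w → ↑w. -/
def INStruct.CCset (M : INStruct W) (w : W) : Set (Set (Set W)) :=
  {S | ∃ f : Nbhd W → W, (∀ a ∈ M.N, w ∈ a.dom → M.le w (f a)) ∧
    S = {s | ∃ a ∈ M.N, w ∈ a.dom ∧ s = a.val (f a)}}

/-- The carrier Ŵ = {(w, Σ) : Σ ∈ 𝒞(w)}. -/
def INStruct.HatW (M : INStruct W) : Type := {p : W × Set (Set W) // p.2 ∈ M.CCset p.1}

/-- The constructive neighbourhood model M̂ associated with M, with
(w,Σ) ⪯ (w',Σ') iff w ≤ w', γ(w,Σ) = Σ (lifted to subsets of Ŵ), and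
V̂(p_i) = {(w,Σ) : w ∈ V(p_i)}. -/
def INStruct.hat (M : INStruct W) : CNStruct M.HatW where
  le := fun p q => M.le p.1.1 q.1.1
  nf := fun p => (fun s => {q : M.HatW | q.1.1 ∈ s}) '' p.1.2
  V := fun i => {p | p.1.1 ∈ M.V i}

end IMPaper

/-!
Soundness is checked axiom by axiom; validity is stable under substitution, so it suffices to
check the axioms themselves, and fullness is exactly what makes `(□⊤ → ◇p) → ◇p` valid.

For completeness, a world of the canonical model is a prime theory `Δ` together with a formula
`ρ` to be avoided. For each `□χ ∈ Δ` the world `(Δ, ρ)` has one neighbourhood: the worlds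
containing `χ`, from which those containing `ρ` are removed unless `χ, σ ⊢ ρ` for some
`◇σ ∈ Δ`. If `□φ ∉ Δ`, every neighbourhood of `(Δ, φ)` contains a world without `φ`.
If `◇φ ∉ Δ`, the axiom `(□⊤ → ◇p) → ◇p` yields a prime extension `Θ` with `□⊤ ∈ Θ` and
`◇φ ∉ Θ`, and the `⊤`-neighbourhood of `(Θ, φ)` misses `φ`. Conversely, if `◇φ ∈ Δ`, every
neighbourhood meets `φ`: the exception clause is made for this, and `(□p ∧ ◇¬p) → ⊥` makes
`χ, φ` consistent.
-/

namespace IMPaper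

section Calculus

variable {Γ Δ : Set Formula} {φ ψ χ : Formula}

theorem IMC.mono (h : IMC Γ φ) (hΓΔ : Γ ⊆ Δ) : IMC Δ φ := by
  induction h generalizing Δ with
  | el h => exact GHC.el (hΓΔ h)
  | ax h => exact GHC.ax h
  | mp _ _ ih₁ ih₂ => exact GHC.mp (ih₁ hΓΔ) (ih₂ hΓΔ)
  | monBox h => exact GHC.monBox h
  | monDia h => exact GHC.monDia h

theorem IMC.exists_mem_of_sUnion {c : Set (Set Formula)} (hc : DirectedOn (· ⊆ ·) c)
    (hne : c.Nonempty) (h : IMC (⋃₀ c) φ) : ∃ Γ ∈ c, IMC Γ φ := by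
  generalize hU : ⋃₀ c = U at h
  induction h with
  | el h =>
      obtain ⟨Γ, hΓ, hφ⟩ := hU ▸ h
      exact ⟨Γ, hΓ, GHC.el hφ⟩
  | ax h => exact ⟨hne.some, hne.some_mem, GHC.ax h⟩
  | mp _ _ ih₁ ih₂ =>
      obtain ⟨Γ₁, hΓ₁, d₁⟩ := ih₁ hU
      obtain ⟨Γ₂, hΓ₂, d₂⟩ := ih₂ hU
      obtain ⟨Γ, hΓ, h₁, h₂⟩ := hc Γ₁ hΓ₁ Γ₂ hΓ₂
      exact ⟨Γ, hΓ, GHC.mp (d₁.mono h₁) (d₂.mono h₂)⟩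
  | monBox h => exact ⟨hne.some, hne.some_mem, GHC.monBox h⟩
  | monDia h => exact ⟨hne.some, hne.some_mem, GHC.monDia h⟩

def subst₃ (a b c : Formula) : ℕ → Formula
  | 0 => a
  | 1 => b
  | _ => c

theorem IMC.ipcAx {A : Formula} (hA : A ∈ IpcAx) (σ : ℕ → Formula) : IMC Γ (A.subst σ) :=
  GHC.ax (Or.inr ⟨A, hA, σ, rfl⟩)

theorem IMC.imAx {A : Formula} (hA : A ∈ IMAx) (σ : ℕ → Formula) : IMC Γ (A.subst σ) :=
  GHC.ax (Or.inl ⟨A, hA, σ, rfl⟩)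

theorem IMC.axiomK : IMC Γ (φ.imp (ψ.imp φ)) :=
  IMC.ipcAx (A := .imp pp0 (.imp pp1 pp0)) (by simp [IpcAx]) (subst₃ φ ψ φ)

theorem IMC.imp_intro (h : IMC Γ φ) : IMC Γ (ψ.imp φ) :=
  GHC.mp h IMC.axiomK

theorem IMC.imp_distrib (h₁ : IMC Γ (φ.imp (ψ.imp χ))) (h₂ : IMC Γ (φ.imp ψ)) :
    IMC Γ (φ.imp χ) :=
  GHC.mp h₂ <| GHC.mp h₁ <| IMC.ipcAx
    (A := .imp (.imp pp0 (.imp pp1 pp2)) (.imp (.imp pp0 pp1) (.imp pp0 pp2)))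
    (by simp [IpcAx]) (subst₃ φ ψ χ)

theorem IMC.and_intro (h₁ : IMC Γ φ) (h₂ : IMC Γ ψ) : IMC Γ (φ.and ψ) :=
  GHC.mp h₂ <| GHC.mp h₁ <|
    IMC.ipcAx (A := .imp pp0 (.imp pp1 (.and pp0 pp1))) (by simp [IpcAx]) (subst₃ φ ψ φ)

theorem IMC.and_left (h : IMC Γ (φ.and ψ)) : IMC Γ φ :=
  GHC.mp h (IMC.ipcAx (A := .imp (.and pp0 pp1) pp0) (by simp [IpcAx]) (subst₃ φ ψ φ))

theorem IMC.and_right (h : IMC Γ (φ.and ψ)) : IMC Γ ψ :=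
  GHC.mp h (IMC.ipcAx (A := .imp (.and pp0 pp1) pp1) (by simp [IpcAx]) (subst₃ φ ψ φ))

theorem IMC.or_inl (h : IMC Γ φ) : IMC Γ (φ.or ψ) :=
  GHC.mp h (IMC.ipcAx (A := .imp pp0 (.or pp0 pp1)) (by simp [IpcAx]) (subst₃ φ ψ φ))

theorem IMC.or_inr (h : IMC Γ ψ) : IMC Γ (φ.or ψ) :=
  GHC.mp h (IMC.ipcAx (A := .imp pp1 (.or pp0 pp1)) (by simp [IpcAx]) (subst₃ φ ψ φ))

theorem IMC.or_elim (h : IMC Γ (φ.or ψ)) (h₁ : IMC Γ (φ.imp χ)) (h₂ : IMC Γ (ψ.imp χ)) :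
    IMC Γ χ :=
  GHC.mp h <| GHC.mp h₂ <| GHC.mp h₁ <| IMC.ipcAx
    (A := .imp (.imp pp0 pp2) (.imp (.imp pp1 pp2) (.imp (.or pp0 pp1) pp2)))
    (by simp [IpcAx]) (subst₃ φ ψ χ)

theorem IMC.exfalso (h : IMC Γ .bot) : IMC Γ φ :=
  GHC.mp h (IMC.ipcAx (A := .imp .bot pp0) (by simp [IpcAx]) (subst₃ φ φ φ))

theorem IMC.bot_of_box_of_dia_neg (h₁ : IMC Γ φ.box) (h₂ : IMC Γ φ.neg.dia) : IMC Γ .bot :=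
  GHC.mp (h₁.and_intro h₂) <| IMC.imAx
    (A := .imp ((Formula.box pp0).and (Formula.dia pp0.neg)) .bot) (by simp [IMAx]) (subst₃ φ φ φ)

theorem IMC.dia_of_box_top_imp (h : IMC Γ (Formula.top.box.imp φ.dia)) : IMC Γ φ.dia :=
  GHC.mp h <| IMC.imAx
    (A := .imp ((Formula.box .top).imp (Formula.dia pp0)) (Formula.dia pp0)) (by simp [IMAx])
    (subst₃ φ φ φ)

theorem IMC.imp_self : IMC Γ (φ.imp φ) :=
  IMC.imp_distrib (ψ := φ.imp φ) IMC.axiomK IMC.axiomK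

theorem IMC.top : IMC Γ Formula.top := IMC.imp_self

theorem IMC.deduction (h : IMC (insert φ Γ) ψ) : IMC Γ (φ.imp ψ) := by
  generalize hΔ : insert φ Γ = Δ at h
  induction h with
  | el h =>
      subst hΔ
      rcases h with rfl | h
      · exact IMC.imp_self
      · exact IMC.imp_intro (GHC.el h)
  | ax h => exact IMC.imp_intro (GHC.ax h)
  | mp _ _ ih₁ ih₂ => exact (ih₂ hΔ).imp_distrib (ih₁ hΔ)
  | monBox h => exact IMC.imp_intro (GHC.monBox h)
  | monDia h => exact IMC.imp_intro (GHC.monDia h)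

theorem IMC.cut (h₁ : IMC Γ φ) (h₂ : IMC (insert φ Γ) ψ) : IMC Γ ψ :=
  GHC.mp h₁ h₂.deduction

end Calculus

structure PrimeTheory where
  carrier : Set Formula
  closed : ∀ {φ : Formula}, IMC carrier φ → φ ∈ carrier
  prime : ∀ {φ ψ : Formula}, φ.or ψ ∈ carrier → φ ∈ carrier ∨ ψ ∈ carrier
  bot_not_mem : Formula.bot ∉ carrier

namespace PrimeTheory

instance : SetLike PrimeTheory Formula where
  coe := carrier
  coe_injective Δ Θ h := by cases Δ; cases Θ; congr

variable {Δ : PrimeTheory} {φ ψ : Formula}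

theorem box_mem_of_imp (h : φ.box ∈ Δ) (hφψ : IMC ∅ (φ.imp ψ)) : ψ.box ∈ Δ :=
  Δ.closed (GHC.mp (GHC.el h) (GHC.monBox hφψ))

theorem dia_mem_of_imp (h : φ.dia ∈ Δ) (hφψ : IMC ∅ (φ.imp ψ)) : ψ.dia ∈ Δ :=
  Δ.closed (GHC.mp (GHC.el h) (GHC.monDia hφψ))

theorem and_mem_iff : φ.and ψ ∈ Δ ↔ φ ∈ Δ ∧ ψ ∈ Δ :=
  ⟨fun h => ⟨Δ.closed (IMC.and_left (GHC.el h)), Δ.closed (IMC.and_right (GHC.el h))⟩,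
    fun ⟨hφ, hψ⟩ => Δ.closed (IMC.and_intro (GHC.el hφ) (GHC.el hψ))⟩

theorem or_mem_iff : φ.or ψ ∈ Δ ↔ φ ∈ Δ ∨ ψ ∈ Δ :=
  ⟨Δ.prime, fun h => h.elim (fun hφ => Δ.closed (IMC.or_inl (GHC.el hφ)))
    (fun hψ => Δ.closed (IMC.or_inr (GHC.el hψ)))⟩

theorem box_top_mem (h : φ.box ∈ Δ) : Formula.top.box ∈ Δ :=
  box_mem_of_imp h (IMC.imp_intro IMC.top)

end PrimeTheory

theorem exists_primeTheory_of_not_imc {Γ : Set Formula} {φ : Formula} (h : ¬ IMC Γ φ) :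
    ∃ Δ : PrimeTheory, Γ ⊆ Δ ∧ φ ∉ Δ := by
  let S : Set (Set Formula) := {Δ | Γ ⊆ Δ ∧ ¬ IMC Δ φ}
  have hchain : ∀ c ⊆ S, IsChain (· ⊆ ·) c → c.Nonempty → ∃ ub ∈ S, ∀ s ∈ c, s ⊆ ub :=
    fun c hcS hc hne => ⟨⋃₀ c,
      ⟨(hcS hne.some_mem).1.trans (Set.subset_sUnion_of_mem hne.some_mem), fun hU =>
        let ⟨Δ, hΔ, hφ⟩ := hU.exists_mem_of_sUnion hc.directedOn hne
        (hcS hΔ).2 hφ⟩,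
      fun _ => Set.subset_sUnion_of_mem⟩
  obtain ⟨Δ, hΓΔ, hmax⟩ := zorn_subset_nonempty S hchain Γ ⟨subset_rfl, h⟩
  have hφ : ¬ IMC Δ φ := hmax.prop.2
  have hinsert : ∀ ψ ∉ Δ, IMC (insert ψ Δ) φ := fun ψ hψ => by_contra fun hn =>
    hψ (hmax.mem_of_prop_insert ⟨hΓΔ.trans (Set.subset_insert _ _), hn⟩)
  refine ⟨⟨Δ, fun {ψ} hψ => ?_, fun {ψ χ} h => ?_, fun h => hφ (IMC.exfalso (GHC.el h))⟩, hΓΔ, ?_⟩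
  · by_contra hψΔ
    exact hφ (hψ.cut (hinsert ψ hψΔ))
  · by_contra! hn
    exact hφ (IMC.or_elim (GHC.el h) (hinsert ψ hn.1).deduction (hinsert χ hn.2).deduction)
  · exact fun hφΔ => hφ (GHC.el hφΔ)

section Canonical

abbrev CanonWorld : Type := PrimeTheory × Formula

def canonNbhd (Δ : PrimeTheory) (χ ρ : Formula) : Set CanonWorld :=
  {v | χ ∈ v.1 ∧ ((∃ σ : Formula, σ.dia ∈ Δ ∧ IMC ∅ (χ.imp (σ.imp ρ))) ∨ ρ ∉ v.1)}

def canon : CNStruct CanonWorld where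
  le w v := (w.1 : Set Formula) ⊆ v.1
  nf w := (fun χ => canonNbhd w.1 χ w.2) '' {χ | χ.box ∈ w.1}
  V i := {w | Formula.prop i ∈ w.1}

theorem canon_isModel : canon.IsModel :=
  ⟨{ refl := fun _ => subset_rfl, trans := fun _ _ _ => subset_trans },
    fun _ _ _ hwv hw => hwv hw⟩

theorem canon_full : canon.Full := by
  intro w w' hww' hw
  obtain ⟨_, χ, hχ, rfl⟩ := Set.nonempty_iff_ne_empty.2 hw
  exact Set.nonempty_iff_ne_empty.1 ⟨_, Formula.top, hww' (PrimeTheory.box_top_mem hχ), rfl⟩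

theorem exists_mem_canonNbhd_of_dia_mem {Δ : PrimeTheory} {φ χ : Formula} (ρ : Formula)
    (hφ : φ.dia ∈ Δ) (hχ : χ.box ∈ Δ) : ∃ v ∈ canonNbhd Δ χ ρ, φ ∈ v.1 := by
  by_cases hexc : ∃ σ : Formula, σ.dia ∈ Δ ∧ IMC ∅ (χ.imp (σ.imp ρ))
  · have hcons : ¬ IMC (insert χ (insert φ ∅)) .bot := fun h =>
      Δ.bot_not_mem <| Δ.closed <| IMC.bot_of_box_of_dia_neg (GHC.el hχ)
        (GHC.el (PrimeTheory.dia_mem_of_imp hφ h.deduction.deduction))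
    obtain ⟨Θ, hΘ, -⟩ := exists_primeTheory_of_not_imc hcons
    exact ⟨(Θ, ρ), ⟨hΘ (by simp), Or.inl hexc⟩, hΘ (by simp)⟩
  · have hρ : ¬ IMC (insert φ (insert χ ∅)) ρ := fun h =>
      hexc ⟨φ, hφ, h.deduction.deduction⟩
    obtain ⟨Θ, hΘ, hρΘ⟩ := exists_primeTheory_of_not_imc hρ
    exact ⟨(Θ, ρ), ⟨hΘ (by simp), Or.inr hρΘ⟩, hΘ (by simp)⟩

variable {φ ψ : Formula}

theorem canon_sat_imp_iff (ihφ : ∀ w, canon.sat φ w ↔ φ ∈ w.1)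
    (ihψ : ∀ w, canon.sat ψ w ↔ ψ ∈ w.1) (w : CanonWorld) :
    canon.sat (φ.imp ψ) w ↔ φ.imp ψ ∈ w.1 := by
  refine ⟨fun h => ?_, fun h v hwv hφ => (ihψ v).2 ?_⟩
  · by_contra hn
    have hψ : ¬ IMC (insert φ w.1) ψ := fun hd => hn (w.1.closed hd.deduction)
    obtain ⟨Θ, hΘ, hψΘ⟩ := exists_primeTheory_of_not_imc hψ
    exact hψΘ <| (ihψ _).1 <|
      h (Θ, w.2) ((Set.subset_insert _ _).trans hΘ) ((ihφ _).2 (hΘ (Set.mem_insert _ _)))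
  · exact v.1.closed (GHC.mp (GHC.el ((ihφ v).1 hφ)) (GHC.el (hwv h)))

theorem canon_sat_box_iff (ih : ∀ w, canon.sat φ w ↔ φ ∈ w.1) (w : CanonWorld) :
    canon.sat φ.box w ↔ φ.box ∈ w.1 := by
  refine ⟨fun h => ?_, fun h w' hww' => ⟨_, ⟨φ, hww' h, rfl⟩, fun v hv => (ih v).2 hv.1⟩⟩
  by_contra hn
  obtain ⟨_, ⟨χ, hχ, rfl⟩, hall⟩ := h (w.1, φ) subset_rfl
  have hφ : ¬ IMC (insert χ ∅) φ := fun hd => hn (PrimeTheory.box_mem_of_imp hχ hd.deduction)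
  obtain ⟨Θ, hΘ, hφΘ⟩ := exists_primeTheory_of_not_imc hφ
  exact hφΘ ((ih _).1 (hall (Θ, φ) ⟨hΘ (Set.mem_insert _ _), Or.inr hφΘ⟩))

theorem canon_sat_dia_iff (ih : ∀ w, canon.sat φ w ↔ φ ∈ w.1) (w : CanonWorld) :
    canon.sat φ.dia w ↔ φ.dia ∈ w.1 := by
  refine ⟨fun h => ?_, fun h w' hww' _ ⟨χ, hχ, ha⟩ => ?_⟩
  · by_contra hn
    have hφ : ¬ IMC (insert Formula.top.box w.1) φ.dia := fun hd =>
      hn (w.1.closed (IMC.dia_of_box_top_imp hd.deduction))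
    obtain ⟨Θ, hΘ, hφΘ⟩ := exists_primeTheory_of_not_imc hφ
    obtain ⟨v, ⟨-, hv⟩, hφv⟩ := h (Θ, φ) ((Set.subset_insert _ _).trans hΘ) _
      ⟨Formula.top, hΘ (Set.mem_insert _ _), rfl⟩
    rcases hv with ⟨σ, hσ, hσφ⟩ | hφv'
    · exact hφΘ (PrimeTheory.dia_mem_of_imp hσ (GHC.mp IMC.top hσφ))
    · exact hφv' ((ih v).1 hφv)
  · obtain ⟨v, hv, hφv⟩ := exists_mem_canonNbhd_of_dia_mem w'.2 (hww' h) hχ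
    exact ⟨v, ha ▸ hv, (ih v).2 hφv⟩

theorem canon_sat_iff : ∀ (φ : Formula) (w : CanonWorld), canon.sat φ w ↔ φ ∈ w.1
  | .prop _, _ => Iff.rfl
  | .bot, w => iff_of_false id w.1.bot_not_mem
  | .and φ ψ, w => ((canon_sat_iff φ w).and (canon_sat_iff ψ w)).trans PrimeTheory.and_mem_iff.symm
  | .or φ ψ, w => ((canon_sat_iff φ w).or (canon_sat_iff ψ w)).trans PrimeTheory.or_mem_iff.symm
  | .imp φ ψ, w => canon_sat_imp_iff (canon_sat_iff φ) (canon_sat_iff ψ) w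
  | .box φ, w => canon_sat_box_iff (canon_sat_iff φ) w
  | .dia φ, w => canon_sat_dia_iff (canon_sat_iff φ) w

end Canonical

namespace CNStruct

variable {W : Type} {M : CNStruct W}

theorem IsModel.le_refl (hM : M.IsModel) (w : W) : M.le w w := hM.1.refl w

theorem IsModel.le_trans (hM : M.IsModel) {u v w : W} (huv : M.le u v) (hvw : M.le v w) :
    M.le u w :=
  hM.1.trans u v w huv hvw

theorem IsModel.sat_mono (hM : M.IsModel) {w v : W} (hwv : M.le w v) :
    ∀ φ : Formula, M.sat φ w → M.sat φ v
  | .prop i, h => hM.2 i hwv h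
  | .bot, h => h
  | .and φ ψ, h => ⟨hM.sat_mono hwv φ h.1, hM.sat_mono hwv ψ h.2⟩
  | .or φ ψ, h => h.imp (hM.sat_mono hwv φ) (hM.sat_mono hwv ψ)
  | .imp _ _, h => fun u hvu => h u (hM.le_trans hwv hvu)
  | .box _, h => fun u hvu => h u (hM.le_trans hwv hvu)
  | .dia _, h => fun u hvu => h u (hM.le_trans hwv hvu)

def substVal (M : CNStruct W) (σ : ℕ → Formula) : CNStruct W :=
  { M with V := fun i => {w | M.sat (σ i) w} }

theorem sat_subst (M : CNStruct W) (σ : ℕ → Formula) :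
    ∀ (φ : Formula) (w : W), M.sat (φ.subst σ) w ↔ (M.substVal σ).sat φ w
  | .prop _, _ => Iff.rfl
  | .bot, _ => Iff.rfl
  | .and φ ψ, w => (sat_subst M σ φ w).and (sat_subst M σ ψ w)
  | .or φ ψ, w => (sat_subst M σ φ w).or (sat_subst M σ ψ w)
  | .imp φ ψ, w => by simp only [Formula.subst, sat, sat_subst M σ φ, sat_subst M σ ψ]; rfl
  | .box φ, w => by simp only [Formula.subst, sat, sat_subst M σ φ]; rfl
  | .dia φ, w => by simp only [Formula.subst, sat, sat_subst M σ φ]; rfl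

theorem IsModel.substVal (hM : M.IsModel) (σ : ℕ → Formula) : (M.substVal σ).IsModel :=
  ⟨hM.1, fun i _ _ hwv => hM.sat_mono hwv (σ i)⟩

theorem IsModel.sat_of_mem_ipcAx (hM : M.IsModel) {A : Formula} (hA : A ∈ IpcAx) (w : W) :
    M.sat A w := by
  simp only [IpcAx, Set.mem_insert_iff, Set.mem_singleton_iff] at hA
  rcases hA with rfl | rfl | rfl | rfl | rfl | rfl | rfl | rfl | rfl
  · exact fun v _ h₀ u hvu _ => hM.sat_mono hvu pp0 h₀
  · exact fun v _ h₀ u hvu h₁ t hut h₂ =>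
      h₀ t (hM.le_trans hvu hut) h₂ t (hM.le_refl t) (h₁ t hut h₂)
  · exact fun _ _ h => h.1
  · exact fun _ _ h => h.2
  · exact fun v _ h₀ u hvu h₁ => ⟨hM.sat_mono hvu pp0 h₀, h₁⟩
  · exact fun _ _ => Or.inl
  · exact fun _ _ => Or.inr
  · exact fun v _ h₀ u hvu h₁ t hut h => h.elim (h₀ t (hM.le_trans hvu hut)) (h₁ t hut)
  · exact fun _ _ => False.elim

theorem sat_box_top_of_mem_nf (hF : M.Full) {w : W} {a : Set W}
    (ha : a ∈ M.nf w) : M.sat Formula.top.box w := fun _ hwu =>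
  let ⟨b, hb⟩ := Set.nonempty_iff_ne_empty.2 (hF hwu (Set.nonempty_of_mem ha).ne_empty)
  ⟨b, hb, fun _ _ _ _ => id⟩

theorem IsModel.sat_of_mem_imAx (hM : M.IsModel) (hF : M.Full) {A : Formula} (hA : A ∈ IMAx)
    (w : W) : M.sat A w := by
  simp only [IMAx, Set.mem_insert_iff, Set.mem_singleton_iff] at hA
  rcases hA with rfl | rfl
  · rintro v - ⟨hbox, hdia⟩
    obtain ⟨a, ha, hall⟩ := hbox v (hM.le_refl v)
    obtain ⟨u, hu, hneg⟩ := hdia v (hM.le_refl v) a ha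
    exact hneg u (hM.le_refl u) (hall u hu)
  · exact fun v _ h v' hvv' a ha =>
      h v' hvv' (sat_box_top_of_mem_nf hF ha) v' (hM.le_refl v') a ha

theorem IsModel.sat_of_mem_scrAx (hM : M.IsModel) (hF : M.Full) {A : Formula}
    (hA : A ∈ ScrAx IMAx) (w : W) : M.sat A w := by
  rcases hA with ⟨A, hA, σ, rfl⟩ | ⟨A, hA, σ, rfl⟩
  · exact (sat_subst M σ A w).2 ((hM.substVal σ).sat_of_mem_imAx hF hA w)
  · exact (sat_subst M σ A w).2 ((hM.substVal σ).sat_of_mem_ipcAx hA w)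

end CNStruct

theorem IMC.sat {W : Type} {M : CNStruct W} (hM : M.IsModel) (hF : M.Full) {Γ : Set Formula}
    {φ : Formula} (h : IMC Γ φ) (w : W) (hΓ : ∀ ψ ∈ Γ, M.sat ψ w) : M.sat φ w := by
  induction h generalizing w with
  | el h => exact hΓ _ h
  | ax h => exact hM.sat_of_mem_scrAx hF h w
  | mp _ _ ih₁ ih₂ => exact ih₂ w hΓ w (hM.le_refl w) (ih₁ w hΓ)
  | monBox _ ih =>
      refine fun v _ h u hvu => ?_
      obtain ⟨a, ha, hall⟩ := h u hvu
      exact ⟨a, ha, fun t ht => ih t (by simp) t (hM.le_refl t) (hall t ht)⟩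
  | monDia _ ih =>
      refine fun v _ h u hvu a ha => ?_
      obtain ⟨t, ht, hφ⟩ := h u hvu a ha
      exact ⟨t, ht, ih t (by simp) t (hM.le_refl t) hφ⟩

/-- Soundness and strong completeness of IMCalc w.r.t. full
constructive neighbourhood models. -/
theorem imcalc_full_cn (Γ : Set Formula) (φ : Formula) :
    IMC Γ φ ↔
      ∀ (W : Type) (M : CNStruct W), M.IsModel → M.Full →
        ∀ w : W, (∀ ψ ∈ Γ, M.sat ψ w) → M.sat φ w := by
  refine ⟨fun h W M hM hF w hΓ => h.sat hM hF w hΓ, fun h => ?_⟩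
  by_contra hφ
  obtain ⟨Δ, hΓΔ, hφΔ⟩ := exists_primeTheory_of_not_imc hφ
  have hΔ : ∀ ψ ∈ Γ, canon.sat ψ (Δ, φ) := fun ψ hψ => (canon_sat_iff ψ _).2 (hΓΔ hψ)
  exact hφΔ ((canon_sat_iff φ _).1 (h _ canon canon_isModel canon_full _ hΔ))

end IMPaper
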